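/- arXiv:2204.01941 — 2 statements merged into one kernel-verified Lean document; each statement's English description precedes it below -/
import Mathlib

section
/- Let {pᵢ} and {qᵢ} be orthonormal polynomial families wrt probability distributions μ and ν respectively, and let C be the upper triangular connection coefficient matrix defined by p_s = Σ_{i≤s} C_{i,s} qᵢ. Then C_{i,j} = ∫ qᵢ pⱼ dν for all i ≤ j, and the entries satisfy the recurrence C_{0,0}=1, C_{0,1} = (γ₀−α₀)/β₀, C_{1,1} = δ₀/β₀, and for i,j ≥ 0: C_{i,j} = (δ_{i−1} C_{i−1,j−1} + (γᵢ − α_{j−1}) C_{i,j−1} + δᵢ C_{i+1,j−1} − β_{j−2} C_{i,j−2})/β_{j−1}, where (αᵢ, βᵢ) and (γᵢ, δᵢ) are the three-term recurrence coefficients for μ and ν respectively. -/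
open MeasureTheory Polynomial

/-!
Both families are expanded against the single linear functional `L r = ∫ r dν` on polynomials.
Orthonormality of `{qᵢ}` identifies `C_{i,j}` with `L (qᵢ pⱼ)`, and the recurrence for `C` is the
identity `L ((X qᵢ) pⱼ) = L ((X pⱼ) qᵢ)`, after expanding `X qᵢ` and `X pⱼ` by their three-term
recurrences and solving for `C_{i,j+1}`.
-/

namespace Polynomial

theorem integrable_eval {ν : Measure ℝ} (hmom : ∀ m : ℕ, Integrable (fun x => x ^ m) ν)
    (r : ℝ[X]) : Integrable (fun x => r.eval x) ν := by
  induction r using Polynomial.induction_on' with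
  | add f g hf hg => simp only [eval_add]; exact hf.add hg
  | monomial n a => simpa [eval_monomial] using (hmom n).const_mul a

noncomputable def integralLinearMap (ν : Measure ℝ)
    (hmom : ∀ m : ℕ, Integrable (fun x => x ^ m) ν) : ℝ[X] →ₗ[ℝ] ℝ where
  toFun r := ∫ x, r.eval x ∂ν
  map_add' r s := by
    simp only [eval_add]
    exact integral_add (integrable_eval hmom r) (integrable_eval hmom s)
  map_smul' a r := by simp only [eval_smul, smul_eq_mul, integral_const_mul, RingHom.id_apply]

theorem integralLinearMap_mul_apply {ν : Measure ℝ}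
    (hmom : ∀ m : ℕ, Integrable (fun x => x ^ m) ν) (r s : ℝ[X]) :
    integralLinearMap ν hmom (r * s) = ∫ x, r.eval x * s.eval x ∂ν := by
  simp only [integralLinearMap, LinearMap.coe_mk, AddHom.coe_mk, eval_mul]

theorem eq_one_of_integral_eval_mul_self_eq_one {μ : Measure ℝ} [IsProbabilityMeasure μ]
    {r : ℝ[X]} (hdeg : r.natDegree = 0) (hlead : 0 < r.leadingCoeff)
    (hnorm : ∫ x, r.eval x * r.eval x ∂μ = 1) : r = 1 := by
  rw [eq_C_of_natDegree_eq_zero hdeg] at hlead hnorm ⊢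
  rw [leadingCoeff_C] at hlead
  simp only [eval_C, integral_const, probReal_univ, smul_eq_mul, one_mul] at hnorm
  rw [show r.coeff 0 = 1 by nlinarith, C_1]

section LinearFunctional

variable (L : ℝ[X] →ₗ[ℝ] ℝ)

theorem map_mul_eq_coeff_of_orthonormal {q : ℕ → ℝ[X]}
    (horth : ∀ i j, L (q i * q j) = if i = j then 1 else 0) {r : ℝ[X]} {n : ℕ} {c : ℕ → ℝ}
    (hr : r = ∑ k ∈ Finset.range (n + 1), C (c k) * q k) (hc : ∀ k, n < k → c k = 0) (i : ℕ) :
    L (q i * r) = c i := by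
  simp only [hr, Finset.mul_sum, ← smul_eq_C_mul, mul_smul_comm, map_sum, map_smul, horth,
    smul_eq_mul, mul_ite, mul_one, mul_zero, Finset.sum_ite_eq, Finset.mem_range]
  split_ifs with h
  · rfl
  · exact (hc i (by omega)).symm

theorem map_X_mul_zero_mul {r : ℕ → ℝ[X]} {a b : ℕ → ℝ}
    (hrec0 : X * r 0 = C (a 0) * r 0 + C (b 0) * r 1) (f : ℝ[X]) :
    L (X * r 0 * f) = a 0 * L (r 0 * f) + b 0 * L (r 1 * f) := by
  simp only [hrec0, add_mul, ← smul_eq_C_mul, smul_mul_assoc, map_add, map_smul, smul_eq_mul]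

theorem map_X_mul_succ_mul {r : ℕ → ℝ[X]} {a b : ℕ → ℝ}
    (hrec : ∀ i, X * r (i + 1) = C (b i) * r i + C (a (i + 1)) * r (i + 1) +
      C (b (i + 1)) * r (i + 2)) (k : ℕ) (f : ℝ[X]) :
    L (X * r (k + 1) * f) =
      b k * L (r k * f) + a (k + 1) * L (r (k + 1) * f) + b (k + 1) * L (r (k + 2) * f) := by
  simp only [hrec, add_mul, ← smul_eq_C_mul, smul_mul_assoc, map_add, map_smul, smul_eq_mul]

end LinearFunctional

end Polynomial

theorem connection_coefficients_formula_and_recurrence_general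
    (μ ν : Measure ℝ) [IsProbabilityMeasure μ] [IsProbabilityMeasure ν]
    (hmomν : ∀ m : ℕ, Integrable (fun x => x ^ m) ν)
    (p q : ℕ → Polynomial ℝ)
    (hdegp : ∀ i, (p i).natDegree = i) (hdegq : ∀ i, (q i).natDegree = i)
    (hleadp : ∀ i, 0 < (p i).leadingCoeff) (hleadq : ∀ i, 0 < (q i).leadingCoeff)
    (horthp : ∀ i j, (∫ x, (p i).eval x * (p j).eval x ∂μ) =
      if i = j then (1 : ℝ) else 0)
    (horthq : ∀ i j, (∫ x, (q i).eval x * (q j).eval x ∂ν) =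
      if i = j then (1 : ℝ) else 0)
    (α β γ δ : ℕ → ℝ) (hβ : ∀ i, 0 < β i)
    (hrecp0 : X * p 0 = Polynomial.C (α 0) * p 0 + Polynomial.C (β 0) * p 1)
    (hrecp : ∀ i, X * p (i + 1) = Polynomial.C (β i) * p i +
      Polynomial.C (α (i + 1)) * p (i + 1) + Polynomial.C (β (i + 1)) * p (i + 2))
    (hrecq0 : X * q 0 = Polynomial.C (γ 0) * q 0 + Polynomial.C (δ 0) * q 1)
    (hrecq : ∀ i, X * q (i + 1) = Polynomial.C (δ i) * q i +
      Polynomial.C (γ (i + 1)) * q (i + 1) + Polynomial.C (δ (i + 1)) * q (i + 2))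
    (C : ℕ → ℕ → ℝ)
    (hC : ∀ s, p s = ∑ i ∈ Finset.range (s + 1), Polynomial.C (C i s) * q i)
    (hCtri : ∀ i j, j < i → C i j = 0) :
    (∀ i j, i ≤ j → C i j = ∫ x, (q i).eval x * (p j).eval x ∂ν) ∧
    C 0 0 = 1 ∧
    C 0 1 = (γ 0 - α 0) / β 0 ∧
    C 1 1 = δ 0 / β 0 ∧
    (∀ j : ℕ, 2 ≤ j →
      C 0 j = ((γ 0 - α (j - 1)) * C 0 (j - 1) + δ 0 * C 1 (j - 1) -
        β (j - 2) * C 0 (j - 2)) / β (j - 1)) ∧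
    (∀ i j : ℕ, 1 ≤ i → 2 ≤ j →
      C i j = (δ (i - 1) * C (i - 1) (j - 1) + (γ i - α (j - 1)) * C i (j - 1) +
        δ i * C (i + 1) (j - 1) - β (j - 2) * C i (j - 2)) / β (j - 1)) := by
  set L := integralLinearMap ν hmomν
  have hqp (i j : ℕ) : L (q i * p j) = C i j :=
    map_mul_eq_coeff_of_orthonormal L (by simpa [L, integralLinearMap_mul_apply]) (hC j)
      (hCtri · j) i
  have hpq (i j : ℕ) : L (p j * q i) = C i j := by rw [mul_comm, hqp]
  have hswap (i j : ℕ) : L (X * q i * p j) = L (X * p j * q i) := by rw [mul_right_comm]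
  have hC00 : C 0 0 = 1 := by
    rw [← hqp, eq_one_of_integral_eval_mul_self_eq_one (hdegp 0) (hleadp 0) (horthp 0 0),
      eq_one_of_integral_eval_mul_self_eq_one (hdegq 0) (hleadq 0) (horthq 0 0),
      integralLinearMap_mul_apply]
    simp
  refine ⟨fun i j _ => by rw [← hqp, integralLinearMap_mul_apply], hC00, ?_, ?_, ?_, ?_⟩
  · have hX := hswap 0 0
    rw [map_X_mul_zero_mul L hrecq0, map_X_mul_zero_mul L hrecp0] at hX
    simp only [hqp, hpq, hC00, hCtri 1 0 one_pos] at hX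
    rw [eq_div_iff (hβ 0).ne']
    linarith
  · have hX := hswap 1 0
    rw [map_X_mul_succ_mul L hrecq, map_X_mul_zero_mul L hrecp0] at hX
    simp only [hqp, hpq, hC00, hCtri 1 0 one_pos, hCtri 2 0 two_pos] at hX
    rw [eq_div_iff (hβ 0).ne']
    linarith
  · intro j hj
    obtain ⟨m, rfl⟩ := Nat.exists_eq_add_of_le' hj
    have hX := hswap 0 (m + 1)
    rw [map_X_mul_zero_mul L hrecq0, map_X_mul_succ_mul L hrecp] at hX
    simp only [hqp, hpq] at hX
    rw [show m + 2 - 1 = m + 1 by omega, Nat.add_sub_cancel, eq_div_iff (hβ (m + 1)).ne']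
    linarith
  · intro i j hi hj
    obtain ⟨k, rfl⟩ := Nat.exists_eq_add_of_le' hi
    obtain ⟨m, rfl⟩ := Nat.exists_eq_add_of_le' hj
    have hX := hswap (k + 1) (m + 1)
    rw [map_X_mul_succ_mul L hrecq, map_X_mul_succ_mul L hrecp] at hX
    simp only [hqp, hpq] at hX
    rw [Nat.add_sub_cancel, show m + 2 - 1 = m + 1 by omega, Nat.add_sub_cancel,
      eq_div_iff (hβ (m + 1)).ne']
    linarith

/-- Let `{pᵢ}` and `{qᵢ}` be orthonormal polynomial families with respect to probability
distributions `μ` and `ν` respectively, with three-term recurrence coefficients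
`(αᵢ, βᵢ)` and `(γᵢ, δᵢ)`, and let `C` be the upper triangular connection coefficient
matrix defined by `p_s = ∑_{i ≤ s} C_{i,s} qᵢ`.  Then `C_{i,j} = ∫ qᵢ pⱼ dν` for all
`i ≤ j`, and the entries satisfy `C_{0,0} = 1`, `C_{0,1} = (γ₀ − α₀)/β₀`,
`C_{1,1} = δ₀/β₀`, and for `i, j ≥ 0` (dropping terms with out-of-range indices):
`C_{i,j} = (δ_{i−1} C_{i−1,j−1} + (γᵢ − α_{j−1}) C_{i,j−1} + δᵢ C_{i+1,j−1}
− β_{j−2} C_{i,j−2}) / β_{j−1}`. -/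
theorem connection_coefficients_formula_and_recurrence
    (μ ν : Measure ℝ) [IsProbabilityMeasure μ] [IsProbabilityMeasure ν]
    (hmomμ : ∀ m : ℕ, Integrable (fun x => x ^ m) μ)
    (hmomν : ∀ m : ℕ, Integrable (fun x => x ^ m) ν)
    (p q : ℕ → Polynomial ℝ)
    (hdegp : ∀ i, (p i).natDegree = i) (hdegq : ∀ i, (q i).natDegree = i)
    (hleadp : ∀ i, 0 < (p i).leadingCoeff) (hleadq : ∀ i, 0 < (q i).leadingCoeff)
    (horthp : ∀ i j, (∫ x, (p i).eval x * (p j).eval x ∂μ) =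
      if i = j then (1 : ℝ) else 0)
    (horthq : ∀ i j, (∫ x, (q i).eval x * (q j).eval x ∂ν) =
      if i = j then (1 : ℝ) else 0)
    (α β γ δ : ℕ → ℝ) (hβ : ∀ i, 0 < β i) (hδ : ∀ i, 0 < δ i)
    (hrecp0 : X * p 0 = Polynomial.C (α 0) * p 0 + Polynomial.C (β 0) * p 1)
    (hrecp : ∀ i, X * p (i + 1) = Polynomial.C (β i) * p i +
      Polynomial.C (α (i + 1)) * p (i + 1) + Polynomial.C (β (i + 1)) * p (i + 2))
    (hrecq0 : X * q 0 = Polynomial.C (γ 0) * q 0 + Polynomial.C (δ 0) * q 1)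
    (hrecq : ∀ i, X * q (i + 1) = Polynomial.C (δ i) * q i +
      Polynomial.C (γ (i + 1)) * q (i + 1) + Polynomial.C (δ (i + 1)) * q (i + 2))
    (C : ℕ → ℕ → ℝ)
    (hC : ∀ s, p s = ∑ i ∈ Finset.range (s + 1), Polynomial.C (C i s) * q i)
    (hCtri : ∀ i j, j < i → C i j = 0) :
    (∀ i j, i ≤ j → C i j = ∫ x, (q i).eval x * (p j).eval x ∂ν) ∧
    C 0 0 = 1 ∧
    C 0 1 = (γ 0 - α 0) / β 0 ∧
    C 1 1 = δ 0 / β 0 ∧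
    (∀ j : ℕ, 2 ≤ j →
      C 0 j = ((γ 0 - α (j - 1)) * C 0 (j - 1) + δ 0 * C 1 (j - 1) -
        β (j - 2) * C 0 (j - 2)) / β (j - 1)) ∧
    (∀ i j : ℕ, 1 ≤ i → 2 ≤ j →
      C i j = (δ (i - 1) * C (i - 1) (j - 1) + (γ i - α (j - 1)) * C i (j - 1) +
        δ i * C (i + 1) (j - 1) - β (j - 2) * C i (j - 2)) / β (j - 1)) :=
  connection_coefficients_formula_and_recurrence_general μ ν hmomν p q hdegp hdegq hleadp hleadq
    horthp horthq α β γ δ hβ hrecp0 hrecp hrecq0 hrecq C hC hCtri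
end

section
/- Let f be 1-Lipschitz on [−1,1] and let q_n be the Jackson-damped degree-n Chebyshev approximant or interpolant of f, obtained by multiplying the k-th Chebyshev coefficient by the Jackson damping coefficient ρ_k = ((n−k+2)cos(kπ/(n+2)) + sin(kπ/(n+2))cot(π/(n+2)))/(n+2). Then ‖f − q_n‖_{[−1,1]} ≤ (π²/2)(n+2)⁻¹. -/
/-!
Write `x = cos θ`. With `K_θ(φ) = 1 + 2 ∑ ρₖ cos kθ cos kφ`, both damped sums are
`q(x) = ∫ K_θ(φ) f(cos φ) dμ(φ)`, where `μ` is the uniform probability on `[0, π]` for the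
approximant and the uniform probability on the `n` Chebyshev angles for the interpolant.
The Jackson coefficients make `J(t) = 1 + 2 ∑ ρₖ cos kt` a positive multiple of
`|∑ₗ sin ((l + 1) π / (n + 2)) e^{ilt}|²`, so `K_θ(φ) = (J(θ - φ) + J(θ + φ)) / 2 ≥ 0`, and
`∫ K_θ dμ = 1` by orthogonality. Hence `|f(x) - q(x)| ≤ ∫ K_θ |x - cos φ| dμ ≤ (M + δ²) / (2δ)`
with `M = ∫ K_θ (x - cos φ)² dμ`. Only `ρ₁`, `ρ₂` and the cosine moments of `μ` up to frequency
`n + 2` enter `M`; these are exact for both measures, except that the nodes alias frequency `2n`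
to `0` when `n ≤ 2`. In all cases `M ≤ δ²` for `δ = π / (n + 2) ≤ (π² / 2) / (n + 2)`.
-/

open Real Finset Polynomial intervalIntegral

open MeasureTheory
open scoped NNReal

theorem two_mul_sin_mul_sum_range_cos (a d : ℝ) (N : ℕ) :
    2 * sin (d / 2) * ∑ j ∈ range N, cos (a + j * d) =
      sin (a + (N - 1 / 2) * d) - sin (a - d / 2) := by
  induction N with
  | zero => simp; ring_nf
  | succ N ih =>
    have step : sin (a + (N + 1 - 1 / 2) * d) - sin (a + (N - 1 / 2) * d) =
        2 * sin (d / 2) * cos (a + N * d) := by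
      rw [sin_sub_sin]; ring_nf
    rw [sum_range_succ, mul_add, ih]
    push_cast
    linarith

theorem sum_range_sum_range_add_sum_range_diag {M : Type*} [AddCommMonoid M] (F : ℕ → ℕ → M)
    (hF : ∀ j l, F j l = F l j) (N : ℕ) :
    ∑ j ∈ range N, ∑ l ∈ range N, F j l + ∑ j ∈ range N, F j j =
      2 • ∑ j ∈ range N, ∑ l ∈ range (j + 1), F j l := by
  induction N with
  | zero => simp
  | succ N ih =>
    simp only [sum_range_succ _ N, sum_add_distrib, smul_add, ← ih, hF _ N, two_nsmul]
    abel

theorem sum_range_sum_range_succ_eq_sum_range_sum_range_sub {M : Type*} [AddCommMonoid M]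
    (F : ℕ → ℕ → M) (N : ℕ) :
    ∑ j ∈ range N, ∑ l ∈ range (j + 1), F j l =
      ∑ k ∈ range N, ∑ l ∈ range (N - k), F (l + k) l := by
  calc ∑ j ∈ range N, ∑ l ∈ range (j + 1), F j l
      = ∑ j ∈ range N, ∑ l ∈ range (j + 1), F (l + (j - l)) l := by
        refine sum_congr rfl fun j _ => sum_congr rfl fun l hl => ?_
        rw [Nat.add_sub_cancel' (Nat.lt_succ_iff.mp (mem_range.mp hl))]
    _ = ∑ l ∈ range N, ∑ k ∈ range (N - l), F (l + k) l :=
        sum_range_diag_flip N fun l d => F (l + d) l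
    _ = ∑ k ∈ range N, ∑ l ∈ range (N - k), F (l + k) l :=
        sum_comm' fun l k => by simp only [mem_range]; omega

theorem sq_sum_mul_cos_add_sq_sum_mul_sin (s : ℕ → ℝ) (N : ℕ) (t : ℝ) :
    (∑ j ∈ range N, s j * cos (j * t)) ^ 2 + (∑ j ∈ range N, s j * sin (j * t)) ^ 2 =
      2 * ∑ k ∈ range N, (∑ l ∈ range (N - k), s l * s (l + k)) * cos (k * t) -
        ∑ j ∈ range N, s j ^ 2 := by
  set F : ℕ → ℕ → ℝ := fun j l => s j * s l * cos ((j - l : ℝ) * t)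
  have hexpand : (∑ j ∈ range N, s j * cos (j * t)) ^ 2 + (∑ j ∈ range N, s j * sin (j * t)) ^ 2 =
      ∑ j ∈ range N, ∑ l ∈ range N, F j l := by
    simp only [sq, sum_mul_sum, ← sum_add_distrib, F, sub_mul, cos_sub]
    refine sum_congr rfl fun j _ => sum_congr rfl fun l _ => by ring
  have hsymm := sum_range_sum_range_add_sum_range_diag F
    (fun j l => by simp only [F, ← cos_neg (((l : ℝ) - j) * t)]; ring_nf) N
  rw [sum_range_sum_range_succ_eq_sum_range_sum_range_sub, nsmul_eq_mul] at hsymm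
  simp only [F, sub_self, zero_mul, cos_zero, mul_one, Nat.cast_add, add_sub_cancel_left,
    Nat.cast_ofNat, ← sq] at hsymm
  rw [hexpand, eq_sub_iff_add_eq, hsymm]
  simp only [mul_comm (s _) (s (_ + _)), sum_mul]

noncomputable def jacksonCoeff (n k : ℕ) : ℝ :=
  (((n : ℝ) - k + 2) * cos (k * π / (n + 2)) + sin (k * π / (n + 2)) * cot (π / (n + 2))) / (n + 2)

section JacksonCoeff

variable (n : ℕ)

lemma pi_div_nat_add_two_pos : 0 < π / (n + 2) := by positivity

lemma pi_div_nat_add_two_lt_pi : π / (n + 2) < π :=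
  div_lt_self pi_pos (by linarith [n.cast_nonneg (α := ℝ)])

lemma sin_pi_div_nat_add_two_pos : 0 < sin (π / (n + 2)) :=
  sin_pos_of_pos_of_lt_pi (pi_div_nat_add_two_pos n) (pi_div_nat_add_two_lt_pi n)

lemma jacksonCoeff_eq (k : ℕ) : jacksonCoeff n k =
    (((n : ℝ) - k + 2) * cos (k * (π / (n + 2))) +
      sin (k * (π / (n + 2))) * cos (π / (n + 2)) / sin (π / (n + 2))) / (n + 2) := by
  rw [jacksonCoeff, cot_eq_cos_div_sin, mul_div_assoc, mul_div_assoc]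

theorem sum_range_sin_mul_sin_eq_jacksonCoeff {k : ℕ} (hk : k ≤ n) :
    ∑ l ∈ range (n + 1 - k), sin ((l + 1) * (π / (n + 2))) * sin ((l + k + 1) * (π / (n + 2))) =
      (n + 2) / 2 * jacksonCoeff n k := by
  rw [jacksonCoeff_eq]
  set α := π / (n + 2) with hα
  have hsα : sin α ≠ 0 := (sin_pi_div_nat_add_two_pos n).ne'
  have hπ : ((n : ℝ) + 2) * α = π := by rw [hα]; field_simp
  have hN : ((n + 1 - k : ℕ) : ℝ) = n + 1 - k := by
    rw [Nat.cast_sub (by omega)]; push_cast; ring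
  have prod_to_sum : ∀ l : ℕ, sin ((l + 1) * α) * sin ((l + k + 1) * α) =
      (cos (k * α) - cos ((k + 2) * α + l * (2 * α))) / 2 := by
    intro l
    rw [show (k : ℝ) * α = (l + k + 1) * α - (l + 1) * α by ring,
      show ((k : ℝ) + 2) * α + l * (2 * α) = (l + k + 1) * α + (l + 1) * α by ring,
      cos_sub, cos_add]
    ring
  have tele := two_mul_sin_mul_sum_range_cos ((k + 2) * α) (2 * α) (n + 1 - k)
  rw [hN, show (2 * α) / 2 = α by ring,
    show ((k : ℝ) + 2) * α + ((n : ℝ) + 1 - k - 1 / 2) * (2 * α) = -(k * α + α) + 2 * π by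
      linear_combination 2 * hπ,
    show ((k : ℝ) + 2) * α - α = k * α + α by ring, sin_add_two_pi, sin_neg, sin_add] at tele
  simp only [prod_to_sum, ← sum_div, sum_sub_distrib, sum_const, card_range, nsmul_eq_mul, hN]
  generalize ∑ j ∈ range (n + 1 - k), cos ((k + 2) * α + j * (2 * α)) = S at tele ⊢
  field_simp
  linear_combination (-1 : ℝ) * tele / 2

lemma jacksonCoeff_zero : jacksonCoeff n 0 = 1 := by
  rw [jacksonCoeff_eq]; field_simp; simp

theorem one_add_two_mul_sum_jacksonCoeff_mul_cos_nonneg (t : ℝ) :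
    0 ≤ 1 + 2 * ∑ k ∈ Icc 1 n, jacksonCoeff n k * cos (k * t) := by
  set s : ℕ → ℝ := fun l => sin ((l + 1) * (π / (n + 2)))
  have hsq := sq_sum_mul_cos_add_sq_sum_mul_sin s (n + 1) t
  have hA : ∀ k ∈ range (n + 1), ∑ l ∈ range (n + 1 - k), s l * s (l + k) =
      (n + 2) / 2 * jacksonCoeff n k := fun k hk => by
    simp only [s, Nat.cast_add]
    exact sum_range_sin_mul_sin_eq_jacksonCoeff n (Nat.lt_succ_iff.mp (mem_range.mp hk))
  have hs0 : ∑ j ∈ range (n + 1), s j ^ 2 = (n + 2) / 2 := by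
    simpa [sq, jacksonCoeff_zero] using hA 0 (by simp)
  have hsum : ∑ k ∈ range (n + 1), (∑ l ∈ range (n + 1 - k), s l * s (l + k)) * cos (k * t) =
      (n + 2) / 2 * (1 + ∑ k ∈ Icc 1 n, jacksonCoeff n k * cos (k * t)) := by
    rw [sum_congr rfl fun k hk => by rw [hA k hk], sum_range_eq_add_Ico _ (by omega : 0 < n + 1),
      Finset.Ico_add_one_right_eq_Icc]
    simp [jacksonCoeff_zero, mul_assoc, mul_add, mul_sum]
  rw [hsum, hs0] at hsq
  have hpos : (0 : ℝ) < (n + 2) / 2 := by positivity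
  nlinarith [sq_nonneg (∑ j ∈ range (n + 1), s j * cos (j * t)),
    sq_nonneg (∑ j ∈ range (n + 1), s j * sin (j * t))]

lemma jacksonCoeff_one : jacksonCoeff n 1 = cos (π / (n + 2)) := by
  have := (sin_pi_div_nat_add_two_pos n).ne'
  rw [jacksonCoeff_eq, Nat.cast_one, one_mul]
  field_simp
  ring

lemma jacksonCoeff_two :
    jacksonCoeff n 2 = (2 * (n + 1) * cos (π / (n + 2)) ^ 2 - n) / (n + 2) := by
  have := (sin_pi_div_nat_add_two_pos n).ne'
  rw [jacksonCoeff_eq]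
  push_cast
  rw [cos_two_mul, sin_two_mul]
  field_simp
  ring

lemma half_le_cos_pi_div_nat_add_two (hn : 1 ≤ n) : 1 / 2 ≤ cos (π / (n + 2)) := by
  rw [← cos_pi_div_three]
  apply cos_le_cos_of_nonneg_of_le_pi (pi_div_nat_add_two_pos n).le (by linarith [pi_pos])
  have hn1 : (1 : ℝ) ≤ n := by exact_mod_cast hn
  gcongr
  linarith

theorem sq_mul_add_jacksonCoeff_le (hn : 1 ≤ n) (x : ℝ) :
    x ^ 2 * (1 - 2 * jacksonCoeff n 1 + jacksonCoeff n 2) + (1 - jacksonCoeff n 2) / 2 ≤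
      (π / (n + 2)) ^ 2 := by
  rw [jacksonCoeff_one, jacksonCoeff_two]
  set α := π / (n + 2)
  have hc := half_le_cos_pi_div_nat_add_two n hn
  have hn1 : (1 : ℝ) ≤ n := by exact_mod_cast hn
  have hsin : sin α ^ 2 ≤ α ^ 2 :=
    pow_le_pow_left₀ (sin_pi_div_nat_add_two_pos n).le (sin_le (pi_div_nat_add_two_pos n).le) 2
  have hquad : 1 - 2 * cos α + (2 * (n + 1) * cos α ^ 2 - n) / (n + 2) =
      2 * (1 - cos α) * (1 - (n + 1) * cos α) / (n + 2) := by field_simp; ring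
  have htail :
      (1 - (2 * (n + 1) * cos α ^ 2 - n) / (n + 2)) / 2 = (n + 1) / (n + 2) * sin α ^ 2 := by
    rw [sin_sq]; field_simp; ring
  rw [hquad, htail]
  have h1 : 2 * (1 - cos α) * (1 - (n + 1) * cos α) / (n + 2) ≤ 0 :=
    div_nonpos_of_nonpos_of_nonneg
      (mul_nonpos_of_nonneg_of_nonpos (by linarith [cos_le_one α]) (by nlinarith)) (by positivity)
  have h2 : (n + 1) / (n + 2) * sin α ^ 2 ≤ α ^ 2 :=
    (mul_le_of_le_one_left (sq_nonneg _) ((div_le_one (by positivity)).mpr (by linarith))).trans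
      hsin
  nlinarith [sq_nonneg x]

lemma sq_mul_add_half_le_of_le_two (hn : 1 ≤ n) (hn2 : n ≤ 2) (x : ℝ) :
    x ^ 2 * (1 - 2 * jacksonCoeff n 1) + 1 / 2 ≤ (π / (n + 2)) ^ 2 := by
  rw [jacksonCoeff_one]
  have hc := half_le_cos_pi_div_nat_add_two n hn
  have hπ : (1 : ℝ) / 2 ≤ (π / (n + 2)) ^ 2 := by
    have : (n : ℝ) + 2 ≤ 4 := by exact_mod_cast (by omega : n + 2 ≤ 4)
    rw [div_pow, le_div_iff₀ (by positivity)]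
    nlinarith [pi_gt_three]
  nlinarith [sq_nonneg x]

end JacksonCoeff

noncomputable def dampedKernel (ρ : ℕ → ℝ) (n : ℕ) (θ φ : ℝ) : ℝ :=
  1 + 2 * ∑ k ∈ Icc 1 n, ρ k * (cos (k * θ) * cos (k * φ))

noncomputable def dampedChebyshevSum (ρ : ℕ → ℝ) (n : ℕ) (a : ℕ → ℝ) (x : ℝ) : ℝ :=
  a 0 / 2 + ∑ k ∈ Icc 1 n, ρ k * a k * (Chebyshev.T ℝ k).eval x

@[fun_prop]
lemma continuous_dampedKernel (ρ : ℕ → ℝ) (n : ℕ) (θ : ℝ) : Continuous (dampedKernel ρ n θ) := by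
  unfold dampedKernel; fun_prop

theorem dampedKernel_jacksonCoeff_nonneg (n : ℕ) (θ φ : ℝ) :
    0 ≤ dampedKernel (jacksonCoeff n) n θ φ := by
  have hsum : 2 * dampedKernel (jacksonCoeff n) n θ φ =
      (1 + 2 * ∑ k ∈ Icc 1 n, jacksonCoeff n k * cos (k * (θ - φ))) +
        (1 + 2 * ∑ k ∈ Icc 1 n, jacksonCoeff n k * cos (k * (θ + φ))) := by
    simp only [dampedKernel, mul_add, mul_sub, mul_sum]
    rw [add_add_add_comm, ← sum_add_distrib]
    congr 1
    · norm_num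
    · exact sum_congr rfl fun k _ => by rw [cos_sub, cos_add]; ring
  linarith [one_add_two_mul_sum_jacksonCoeff_mul_cos_nonneg n (θ - φ),
    one_add_two_mul_sum_jacksonCoeff_mul_cos_nonneg n (θ + φ)]

theorem abs_sub_integral_mul_le_of_lipschitzOnWith {X : Type*} [MeasurableSpace X] {μ : Measure X}
    {s : Set ℝ} {f : ℝ → ℝ} (hf : LipschitzOnWith 1 f s) {u K : X → ℝ} (hu : ∀ φ, u φ ∈ s)
    (hK : ∀ φ, 0 ≤ K φ) (hK1 : ∫ φ, K φ ∂μ = 1) {y : ℝ} (hy : y ∈ s)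
    (hKi : Integrable K μ) (hKf : Integrable (fun φ => K φ * f (u φ)) μ)
    (hKu : Integrable (fun φ => K φ * (y - u φ) ^ 2) μ) {δ : ℝ} (hδ : 0 < δ)
    (hM : ∫ φ, K φ * (y - u φ) ^ 2 ∂μ ≤ δ ^ 2) :
    |f y - ∫ φ, K φ * f (u φ) ∂μ| ≤ δ := by
  have hdiff : f y - ∫ φ, K φ * f (u φ) ∂μ = ∫ φ, K φ * (f y - f (u φ)) ∂μ := by
    simp only [mul_sub]
    rw [integral_sub (hKi.mul_const _) hKf, MeasureTheory.integral_mul_const, hK1, one_mul]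
  -- AM-GM, `|d| ≤ (d² + δ²) / (2δ)`, lets the second moment control the first.
  have hpt : ∀ φ, ‖K φ * (f y - f (u φ))‖ ≤ K φ * (y - u φ) ^ 2 / (2 * δ) + δ / 2 * K φ := by
    intro φ
    have hlip : |f y - f (u φ)| ≤ |y - u φ| := by
      simpa [Real.dist_eq] using hf.dist_le_mul y hy (u φ) (hu φ)
    have amgm : |y - u φ| ≤ (y - u φ) ^ 2 / (2 * δ) + δ / 2 := by
      rw [div_add' _ _ _ (by positivity), le_div_iff₀ (by positivity)]
      nlinarith [sq_nonneg (|y - u φ| - δ), sq_abs (y - u φ)]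
    rw [Real.norm_eq_abs, abs_mul, abs_of_nonneg (hK φ)]
    calc K φ * |f y - f (u φ)| ≤ K φ * ((y - u φ) ^ 2 / (2 * δ) + δ / 2) :=
          mul_le_mul_of_nonneg_left (hlip.trans amgm) (hK φ)
      _ = _ := by ring
  have hbound := norm_integral_le_of_norm_le
    ((hKu.div_const (2 * δ)).add (hKi.const_mul (δ / 2))) (ae_of_all μ hpt)
  rw [Pi.add_def, integral_add (hKu.div_const _) (hKi.const_mul _), MeasureTheory.integral_div,
    MeasureTheory.integral_const_mul, hK1, ← hdiff, Real.norm_eq_abs] at hbound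
  refine hbound.trans ?_
  rw [div_add' _ _ _ (by positivity), div_le_iff₀ (by positivity)]
  nlinarith

noncomputable def cosMoment (μ : Measure ℝ) (m : ℝ) : ℝ := ∫ φ, cos (m * φ) ∂μ

section Moments

variable {μ : Measure ℝ} (hμ : ∀ h : ℝ → ℝ, Continuous h → Integrable h μ) (ρ : ℕ → ℝ) (n : ℕ)
include hμ

theorem integral_dampedKernel_mul (θ : ℝ) {g : ℝ → ℝ} (hg : Continuous g) :
    ∫ φ, dampedKernel ρ n θ φ * g φ ∂μ = ∫ φ, g φ ∂μ +
      ∑ k ∈ Icc 1 n, ρ k * (2 * ∫ φ, g φ * cos (k * φ) ∂μ) * cos (k * θ) := by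
  have hexp : ∀ φ, dampedKernel ρ n θ φ * g φ =
      g φ + ∑ k ∈ Icc 1 n, 2 * ρ k * cos (k * θ) * (g φ * cos (k * φ)) := fun φ => by
    simp only [dampedKernel, add_mul, one_mul, mul_sum, sum_mul]
    congr 1
    exact sum_congr rfl fun k _ => by ring
  simp_rw [hexp]
  rw [integral_add (hμ g hg) (integrable_finsetSum _ fun k _ => hμ _ (by fun_prop)),
    integral_finsetSum _ fun k _ => hμ _ (by fun_prop)]
  congr 1
  exact sum_congr rfl fun k _ => by rw [MeasureTheory.integral_const_mul]; ring

lemma two_mul_integral_cos_mul_cos (a b : ℝ) :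
    2 * ∫ φ, cos (a * φ) * cos (b * φ) ∂μ = cosMoment μ (a + b) + cosMoment μ (a - b) := by
  rw [cosMoment, cosMoment, ← integral_add (hμ _ (by fun_prop)) (hμ _ (by fun_prop)),
    ← MeasureTheory.integral_const_mul]
  congr 1 with φ
  rw [add_mul, sub_mul, cos_add, cos_sub]
  ring

omit hμ in
lemma cosMoment_neg (m : ℝ) : cosMoment μ (-m) = cosMoment μ m := by
  simp only [cosMoment, neg_mul, cos_neg]

-- The frequency `2 n` is exempted in `hC`: the `n` Chebyshev nodes alias it to `0`.
theorem integral_dampedKernel_mul_cos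
    (hC : ∀ m : ℕ, 0 < m → m ≤ n + 2 → m ≠ 2 * n → cosMoment μ m = 0) (θ : ℝ) {l : ℕ}
    (hl : l ≤ 2) :
    ∫ φ, dampedKernel ρ n θ φ * cos (l * φ) ∂μ = cosMoment μ l +
      if l ∈ Icc 1 n then ρ l * (cosMoment μ (2 * l) + cosMoment μ 0) * cos (l * θ) else 0 := by
  rw [integral_dampedKernel_mul hμ ρ n θ (by fun_prop), cosMoment]
  congr 1
  rw [← sum_ite_eq' (Icc 1 n) l fun k => ρ k * (cosMoment μ (2 * k) + cosMoment μ 0) * cos (k * θ)]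
  refine sum_congr rfl fun k hk => ?_
  rw [two_mul_integral_cos_mul_cos hμ]
  rw [mem_Icc] at hk
  split_ifs with hkl
  · subst hkl; ring_nf
  · have hplus : cosMoment μ (l + k) = 0 := by
      exact_mod_cast hC (l + k) (by omega) (by omega) (by omega)
    have hminus : cosMoment μ (l - k) = 0 := by
      rcases le_total k l with hkl' | hkl'
      · exact_mod_cast (Nat.cast_sub hkl' (R := ℝ)) ▸ hC (l - k) (by omega) (by omega) (by omega)
      · rw [← cosMoment_neg, neg_sub]
        exact_mod_cast (Nat.cast_sub hkl' (R := ℝ)) ▸ hC (k - l) (by omega) (by omega) (by omega)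
    rw [hplus, hminus]; ring

theorem integral_mul_sq_cos_sub_cos {K : ℝ → ℝ} (hK : Continuous K) (θ : ℝ) :
    ∫ φ, K φ * (cos θ - cos φ) ^ 2 ∂μ = (cos θ ^ 2 + 1 / 2) * ∫ φ, K φ ∂μ -
      2 * cos θ * ∫ φ, K φ * cos φ ∂μ + (∫ φ, K φ * cos (2 * φ) ∂μ) / 2 := by
  have hexp : ∀ φ, K φ * (cos θ - cos φ) ^ 2 = (cos θ ^ 2 + 1 / 2) * K φ -
      2 * cos θ * (K φ * cos φ) + K φ * cos (2 * φ) / 2 := fun φ => by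
    rw [cos_two_mul]; ring
  simp_rw [hexp]
  rw [integral_add (by apply Integrable.sub <;> exact hμ _ (by fun_prop)) (hμ _ (by fun_prop)),
    integral_sub (hμ _ (by fun_prop)) (hμ _ (by fun_prop)), MeasureTheory.integral_div,
    MeasureTheory.integral_const_mul, MeasureTheory.integral_const_mul]

theorem integral_dampedKernel_eq_one_and_secondMoment_eq (hn : 1 ≤ n)
    (hC : ∀ m : ℕ, 0 < m → m ≤ n + 2 → m ≠ 2 * n → cosMoment μ m = 0) (hC0 : cosMoment μ 0 = 1)
    (θ : ℝ) :
    ∫ φ, dampedKernel ρ n θ φ ∂μ = 1 ∧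
      ∫ φ, dampedKernel ρ n θ φ * (cos θ - cos φ) ^ 2 ∂μ =
        cos θ ^ 2 * (1 - 2 * ρ 1 * (cosMoment μ 2 + 1)) + (1 + cosMoment μ 2) / 2 +
          (if 2 ≤ n then ρ 2 * (cosMoment μ 4 + 1) * (2 * cos θ ^ 2 - 1) else 0) / 2 := by
  have hC1 : cosMoment μ 1 = 0 := by simpa using hC 1 one_pos (by omega) (by omega)
  have m0 := integral_dampedKernel_mul_cos hμ ρ n hC θ (l := 0) (by norm_num)
  have m1 := integral_dampedKernel_mul_cos hμ ρ n hC θ (l := 1) (by norm_num)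
  have m2 := integral_dampedKernel_mul_cos hμ ρ n hC θ (l := 2) (by norm_num)
  norm_num [hC0, hC1, hn] at m0 m1 m2
  refine ⟨m0, ?_⟩
  rw [integral_mul_sq_cos_sub_cos hμ (continuous_dampedKernel ρ n θ), m0, m1, m2, cos_two_mul]
  ring

theorem abs_sub_dampedChebyshevSum_le {f : ℝ → ℝ} (hf : LipschitzOnWith 1 f (Set.Icc (-1) 1))
    {a : ℕ → ℝ} (ha : ∀ k : ℕ, a k = 2 * ∫ φ, f (cos φ) * cos (k * φ) ∂μ) {θ δ : ℝ} (hδ : 0 < δ)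
    (hK : ∀ φ, 0 ≤ dampedKernel ρ n θ φ) (hK1 : ∫ φ, dampedKernel ρ n θ φ ∂μ = 1)
    (hM : ∫ φ, dampedKernel ρ n θ φ * (cos θ - cos φ) ^ 2 ∂μ ≤ δ ^ 2) :
    |f (cos θ) - dampedChebyshevSum ρ n a (cos θ)| ≤ δ := by
  have hg : Continuous fun φ => f (cos φ) :=
    hf.continuousOn.comp_continuous continuous_cos cos_mem_Icc
  have hq : dampedChebyshevSum ρ n a (cos θ) = ∫ φ, dampedKernel ρ n θ φ * f (cos φ) ∂μ := by
    rw [integral_dampedKernel_mul hμ ρ n θ hg]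
    simp [dampedChebyshevSum, ha, Chebyshev.T_real_cos]
  rw [hq]
  exact abs_sub_integral_mul_le_of_lipschitzOnWith hf cos_mem_Icc hK hK1 (cos_mem_Icc θ)
    (hμ _ (by fun_prop)) (hμ _ ((continuous_dampedKernel ρ n θ).mul hg)) (hμ _ (by fun_prop)) hδ hM

end Moments

noncomputable def uniformAngleMeasure : Measure ℝ := NNReal.pi⁻¹ • volume.restrict (Set.Ioc 0 π)

lemma integral_uniformAngleMeasure (h : ℝ → ℝ) :
    ∫ φ, h φ ∂uniformAngleMeasure = π⁻¹ * ∫ φ in 0..π, h φ := by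
  rw [uniformAngleMeasure, integral_smul_nnreal_measure, intervalIntegral.integral_of_le pi_pos.le]
  simp [NNReal.smul_def]

lemma integrable_uniformAngleMeasure {h : ℝ → ℝ} (hh : Continuous h) :
    Integrable h uniformAngleMeasure :=
  (hh.integrableOn_Ioc).smul_measure_nnreal

lemma cosMoment_uniformAngleMeasure_zero : cosMoment uniformAngleMeasure 0 = 1 := by
  rw [cosMoment, integral_uniformAngleMeasure]
  simp [pi_ne_zero]

lemma cosMoment_uniformAngleMeasure_of_ne_zero {m : ℕ} (hm : m ≠ 0) :
    cosMoment uniformAngleMeasure m = 0 := by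
  rw [cosMoment, integral_uniformAngleMeasure, intervalIntegral.integral_comp_mul_left cos
    (Nat.cast_ne_zero.mpr hm), integral_cos, mul_zero, sin_zero, sin_nat_mul_pi]
  simp

theorem intervalIntegral_mul_inv_pi_mul_sqrt_eq_integral_uniformAngleMeasure (F : ℝ → ℝ) :
    ∫ x in (-1 : ℝ)..1, F x * (π * √(1 - x ^ 2))⁻¹ = ∫ φ, F (cos φ) ∂uniformAngleMeasure := by
  have himage : cos '' Set.Ioo 0 π = Set.Ioo (-1) 1 := cosPartialHomeomorph.image_source_eq_target
  have hsubst := integral_image_eq_integral_abs_deriv_smul measurableSet_Ioo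
    (fun θ _ => (hasDerivAt_cos θ).hasDerivWithinAt) (injOn_cos.mono Set.Ioo_subset_Icc_self)
    fun x => F x * (π * √(1 - x ^ 2))⁻¹
  rw [intervalIntegral.integral_of_le (by norm_num), integral_Ioc_eq_integral_Ioo, ← himage, hsubst,
    integral_uniformAngleMeasure, intervalIntegral.integral_of_le pi_pos.le,
    integral_Ioc_eq_integral_Ioo, ← MeasureTheory.integral_const_mul]
  refine setIntegral_congr_fun measurableSet_Ioo fun θ hθ => ?_
  have hsin := sin_pos_of_pos_of_lt_pi hθ.1 hθ.2
  rw [← sin_arccos, arccos_cos hθ.1.le hθ.2.le, abs_neg, abs_of_pos hsin, smul_eq_mul]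
  field_simp

theorem uniformAngleMeasure_moments {n : ℕ} (hn : 1 ≤ n) (θ : ℝ) :
    ∫ φ, dampedKernel (jacksonCoeff n) n θ φ ∂uniformAngleMeasure = 1 ∧
      ∫ φ, dampedKernel (jacksonCoeff n) n θ φ * (cos θ - cos φ) ^ 2 ∂uniformAngleMeasure ≤
        (π / (n + 2)) ^ 2 := by
  have hC (m : ℕ) (hm : 0 < m) (_ : m ≤ n + 2) (_ : m ≠ 2 * n) :
      cosMoment uniformAngleMeasure m = 0 :=
    cosMoment_uniformAngleMeasure_of_ne_zero hm.ne'
  obtain ⟨hK1, hM⟩ := integral_dampedKernel_eq_one_and_secondMoment_eq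
    (fun _ => integrable_uniformAngleMeasure) _ n hn hC cosMoment_uniformAngleMeasure_zero θ
  refine ⟨hK1, hM ▸ ?_⟩
  rw [show cosMoment uniformAngleMeasure 2 = 0 by
      simpa using cosMoment_uniformAngleMeasure_of_ne_zero two_ne_zero,
    show cosMoment uniformAngleMeasure 4 = 0 by
      simpa using cosMoment_uniformAngleMeasure_of_ne_zero four_ne_zero]
  split_ifs with hn2
  · linarith [sq_mul_add_jacksonCoeff_le n hn (cos θ)]
  · linarith [sq_mul_add_half_le_of_le_two n hn (by omega) (cos θ)]

noncomputable def nodeAngle (n j : ℕ) : ℝ := π - π * (j - 1 / 2) / n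

noncomputable def nodeAngleMeasure (n : ℕ) : Measure ℝ :=
  (n : ℝ≥0)⁻¹ • ∑ j ∈ Icc 1 n, Measure.dirac (nodeAngle n j)

lemma integral_nodeAngleMeasure (n : ℕ) (h : ℝ → ℝ) :
    ∫ φ, h φ ∂nodeAngleMeasure n = (n : ℝ)⁻¹ * ∑ j ∈ Icc 1 n, h (nodeAngle n j) := by
  rw [nodeAngleMeasure, integral_smul_nnreal_measure,
    integral_finsetSum_measure fun j _ => integrable_dirac enorm_lt_top]
  simp [NNReal.smul_def]

lemma integrable_nodeAngleMeasure (n : ℕ) (h : ℝ → ℝ) : Integrable h (nodeAngleMeasure n) :=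
  (integrable_finsetSum_measure.mpr fun _ _ => integrable_dirac enorm_lt_top).smul_measure_nnreal

section NodeAngle
variable {n : ℕ} (hn : n ≠ 0)
include hn

lemma sum_cos_mul_nodeAngle_eq_zero {m : ℕ} (hm : ¬ 2 * n ∣ m) :
    ∑ j ∈ Icc 1 n, cos (m * nodeAngle n j) = 0 := by
  have hsin : sin (m * π / (2 * n)) ≠ 0 := by
    rw [Ne, sin_eq_zero_iff]
    rintro ⟨k, hk⟩
    have hmk : ((m : ℤ) : ℝ) = ((2 * n * k : ℤ) : ℝ) := by
      push_cast; field_simp at hk; linarith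
    exact hm (Int.natCast_dvd_natCast.mp ⟨k, by exact_mod_cast hmk⟩)
  have tele := two_mul_sin_mul_sum_range_cos (m * π - m * π / (2 * n)) (-(m * π / n)) n
  rw [show m * π - m * π / (2 * n) + (n - 1 / 2) * -(m * π / n) = 0 by field_simp; ring,
    show m * π - m * π / (2 * n) - -(m * π / n) / 2 = m * π by field_simp; ring,
    show -(m * π / n) / 2 = -(m * π / (2 * n)) by ring, sin_neg, sin_zero, sin_nat_mul_pi] at tele
  rw [← Finset.Ico_add_one_right_eq_Icc, sum_Ico_eq_sum_range, Nat.add_sub_cancel]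
  convert (mul_eq_zero.mp (tele.trans (sub_zero 0))).resolve_left (by simpa using hsin) using 2
  simp only [nodeAngle]
  push_cast
  congr 1
  field_simp
  ring

lemma cosMoment_nodeAngleMeasure_of_not_dvd {m : ℕ} (hm : ¬ 2 * n ∣ m) :
    cosMoment (nodeAngleMeasure n) m = 0 := by
  rw [cosMoment, integral_nodeAngleMeasure, sum_cos_mul_nodeAngle_eq_zero hn hm, mul_zero]

lemma cosMoment_nodeAngleMeasure_zero : cosMoment (nodeAngleMeasure n) 0 = 1 := by
  rw [cosMoment, integral_nodeAngleMeasure]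
  simp [hn]

lemma cosMoment_nodeAngleMeasure_two_mul : cosMoment (nodeAngleMeasure n) (2 * n) = -1 := by
  have hcos : ∀ j : ℕ, cos (2 * n * nodeAngle n j) = -1 := fun j => by
    rw [show 2 * n * nodeAngle n j = π + ((n - j : ℤ) : ℝ) * (2 * π) by
      simp only [nodeAngle]; push_cast; field_simp; ring, cos_add_int_mul_two_pi, cos_pi]
  rw [cosMoment, integral_nodeAngleMeasure]
  simp [hcos, hn]

end NodeAngle

theorem nodeAngleMeasure_moments {n : ℕ} (hn : 1 ≤ n) (θ : ℝ) :
    ∫ φ, dampedKernel (jacksonCoeff n) n θ φ ∂nodeAngleMeasure n = 1 ∧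
      ∫ φ, dampedKernel (jacksonCoeff n) n θ φ * (cos θ - cos φ) ^ 2 ∂nodeAngleMeasure n ≤
        (π / (n + 2)) ^ 2 := by
  have hn0 : n ≠ 0 := by omega
  have hC (m : ℕ) (hm : 0 < m) (hmn : m ≤ n + 2) (hm2n : m ≠ 2 * n) :
      cosMoment (nodeAngleMeasure n) m = 0 := by
    refine cosMoment_nodeAngleMeasure_of_not_dvd hn0 ?_
    rintro ⟨_ | _ | c, rfl⟩ <;> [simp at hm; simp at hm2n; nlinarith]
  obtain ⟨hK1, hM⟩ := integral_dampedKernel_eq_one_and_secondMoment_eq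
    (fun h _ => integrable_nodeAngleMeasure n h) _ n hn hC (cosMoment_nodeAngleMeasure_zero hn0) θ
  refine ⟨hK1, hM ▸ ?_⟩
  obtain rfl | rfl | hn3 : n = 1 ∨ n = 2 ∨ 3 ≤ n := by omega
  · have hC2 : cosMoment (nodeAngleMeasure 1) 2 = -1 := by
      simpa using cosMoment_nodeAngleMeasure_two_mul one_ne_zero
    have hπ : 1 ≤ (π / 3) ^ 2 := by
      rw [div_pow, le_div_iff₀ (by norm_num)]; nlinarith [pi_gt_three]
    norm_num [hC2]
    nlinarith [cos_sq_le_one θ]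
  · have hC2 : cosMoment (nodeAngleMeasure 2) 2 = 0 := by
      simpa using hC 2 two_pos (by norm_num) (by norm_num)
    have hC4 : cosMoment (nodeAngleMeasure 2) 4 = -1 := by
      simpa [show (2 : ℝ) * 2 = 4 by norm_num] using cosMoment_nodeAngleMeasure_two_mul two_ne_zero
    norm_num [hC2, hC4]
    linarith [sq_mul_add_half_le_of_le_two 2 hn le_rfl (cos θ)]
  · rw [show cosMoment (nodeAngleMeasure n) 2 = 0 by simpa using hC 2 two_pos (by omega) (by omega),
      show cosMoment (nodeAngleMeasure n) 4 = 0 by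
        simpa using hC 4 (by omega) (by omega) (by omega),
      if_pos (by omega)]
    linarith [sq_mul_add_jacksonCoeff_le n hn (cos θ)]

/-- Let `f` be 1-Lipschitz on `[−1,1]` and let `q_n` be the Jackson-damped degree-`n`
Chebyshev approximant (resp. interpolant) of `f`, obtained by multiplying the `k`-th
Chebyshev coefficient by the Jackson damping coefficient
`ρ_k = ((n−k+2)cos(kπ/(n+2)) + sin(kπ/(n+2))cot(π/(n+2)))/(n+2)`.  Then
`‖f − q_n‖_{[−1,1]} ≤ (π²/2)(n+2)⁻¹`. -/
theorem jackson_damped_chebyshev_bound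
    (f : ℝ → ℝ) (hlip : LipschitzOnWith 1 f (Set.Icc (-1) 1))
    (n : ℕ) (hn : 1 ≤ n)
    (ρ : ℕ → ℝ)
    (hρ : ∀ k : ℕ, ρ k =
      (((n : ℝ) - k + 2) * Real.cos (k * Real.pi / (n + 2)) +
        Real.sin (k * Real.pi / (n + 2)) * Real.cot (Real.pi / (n + 2))) / (n + 2))
    (aA : ℕ → ℝ)
    (haA : ∀ k : ℕ, aA k = 2 * ∫ x in (-1 : ℝ)..1,
      f x * (Polynomial.Chebyshev.T ℝ (k : ℤ)).eval x *
        (Real.pi * Real.sqrt (1 - x ^ 2))⁻¹)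
    (node : ℕ → ℝ)
    (hnode : ∀ j : ℕ, node j = -Real.cos (Real.pi * (j - 1 / 2) / n))
    (aI : ℕ → ℝ)
    (haI : ∀ k : ℕ, aI k = 2 * (n : ℝ)⁻¹ * ∑ j ∈ Finset.Icc 1 n,
      f (node j) * (Polynomial.Chebyshev.T ℝ (k : ℤ)).eval (node j))
    (qA qI : ℝ → ℝ)
    (hqA : ∀ x, qA x = aA 0 / 2 + ∑ k ∈ Finset.Icc 1 n,
      ρ k * aA k * (Polynomial.Chebyshev.T ℝ (k : ℤ)).eval x)
    (hqI : ∀ x, qI x = aI 0 / 2 + ∑ k ∈ Finset.Icc 1 n,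
      ρ k * aI k * (Polynomial.Chebyshev.T ℝ (k : ℤ)).eval x) :
    ∀ x ∈ Set.Icc (-1 : ℝ) 1,
      |f x - qA x| ≤ Real.pi ^ 2 / 2 * ((n : ℝ) + 2)⁻¹ ∧
      |f x - qI x| ≤ Real.pi ^ 2 / 2 * ((n : ℝ) + 2)⁻¹ := by
  intro x hx
  obtain ⟨θ, rfl⟩ : ∃ θ, cos θ = x := ⟨arccos x, cos_arccos hx.1 hx.2⟩
  obtain rfl : ρ = jacksonCoeff n := funext hρ
  have hδ : π / (n + 2) ≤ π ^ 2 / 2 * ((n : ℝ) + 2)⁻¹ := by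
    rw [div_eq_mul_inv]
    gcongr
    nlinarith [pi_gt_three]
  obtain ⟨hA1, hAM⟩ := uniformAngleMeasure_moments hn θ
  obtain ⟨hI1, hIM⟩ := nodeAngleMeasure_moments hn θ
  have hnode' (j : ℕ) : node j = cos (nodeAngle n j) := by rw [hnode, nodeAngle, cos_pi_sub]
  constructor
  · rw [hqA]
    refine (abs_sub_dampedChebyshevSum_le (fun _ => integrable_uniformAngleMeasure) _ n hlip
      (fun k => ?_) (by positivity) (dampedKernel_jacksonCoeff_nonneg n θ) hA1 hAM).trans hδ
    rw [haA, intervalIntegral_mul_inv_pi_mul_sqrt_eq_integral_uniformAngleMeasure]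
    simp [Chebyshev.T_real_cos]
  · rw [hqI]
    refine (abs_sub_dampedChebyshevSum_le (fun h _ => integrable_nodeAngleMeasure n h) _ n hlip
      (fun k => ?_) (by positivity) (dampedKernel_jacksonCoeff_nonneg n θ) hI1 hIM).trans hδ
    rw [haI, integral_nodeAngleMeasure]
    simp [hnode', Chebyshev.T_real_cos, mul_assoc]
end
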